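/- Let ρ = 1−δ+iγ with 0 ≤ δ ≤ 1, and let X₁ ≥ 1, |γ|/X₁ ≤ |η| ≤ 1/2. Then T_ρ(η) = Σ_{X₁ < n ≤ X} n^{ρ−1} e(nη) satisfies |T_ρ(η)| ≪ X₁^{-δ}|η|^{-1} ≤ |η|^{-1}, with an absolute implied constant. -/

import Mathlib

/-! The summand is `n ^ (-δ) • e (g n)` with phase `g n = n η + γ log n / (2π)`. For `n > X₁` the
increments `g (n + 1) - g n = η + γ log (1 + 1/n) / (2π)` differ from `η` by at most `|η| / 2` and
vary monotonically, so (after conjugating when `η < 0`) the Kusmin–Landau inequality bounds every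
partial sum of `e (g n)` by `2 / |η|`. Kusmin–Landau itself is summation by parts against
`(e (g (n + 1) - g n) - 1)⁻¹ = -(1 + i cot (π (g (n + 1) - g n))) / 2`, whose variation telescopes
because `cot` is monotone. A second summation by parts against the decreasing weights
`n ^ (-δ) ≤ X₁ ^ (-δ)` gives the theorem. -/

open Complex

noncomputable def e (u : ℝ) : ℂ := Complex.exp (2 * Real.pi * Complex.I * u)

open Finset
open scoped Real ComplexConjugate

lemma e_eq_exp_mul_I (u : ℝ) : e u = exp ((2 * π * u : ℝ) * I) := by
  rw [e]; push_cast; ring_nf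

lemma norm_e (u : ℝ) : ‖e u‖ = 1 := by
  rw [e_eq_exp_mul_I, norm_exp_ofReal_mul_I]

lemma e_add (u v : ℝ) : e (u + v) = e u * e v := by
  simp only [e, ← exp_add]; push_cast; ring_nf

lemma conj_e (u : ℝ) : conj (e u) = e (-u) := by
  rw [e_eq_exp_mul_I, e_eq_exp_mul_I, ← exp_conj, map_mul, conj_ofReal, conj_I]
  push_cast; ring_nf

lemma norm_sum_e_neg {ι : Type*} (s : Finset ι) (g : ι → ℝ) :
    ‖∑ n ∈ s, e (-g n)‖ = ‖∑ n ∈ s, e (g n)‖ := by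
  simp only [← conj_e, ← map_sum, RCLike.norm_conj]

lemma e_half_eq (φ : ℝ) : e (φ / 2) = Real.cos (π * φ) + Real.sin (π * φ) * I := by
  rw [e_eq_exp_mul_I, exp_mul_I, ← ofReal_cos, ← ofReal_sin]
  ring_nf

lemma e_sub_one_eq (φ : ℝ) : e φ - 1 = 2 * Real.sin (π * φ) * I * e (φ / 2) := by
  have h := Real.sin_sq_add_cos_sq (π * φ)
  rw [← add_halves φ, e_add, add_halves, e_half_eq]
  generalize Real.sin (π * φ) = s at *
  generalize Real.cos (π * φ) = c at *
  apply Complex.ext <;> simp <;> nlinarith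

lemma norm_e_sub_one (φ : ℝ) : ‖e φ - 1‖ = 2 * |Real.sin (π * φ)| := by
  rw [e_sub_one_eq, norm_mul, norm_e, norm_mul, norm_I, norm_mul, norm_real]
  simp

lemma inv_e_sub_one {φ : ℝ} (hφ : Real.sin (π * φ) ≠ 0) :
    (e φ - 1)⁻¹ = -(1 + Real.cot (π * φ) * I) / 2 := by
  have h := Real.sin_sq_add_cos_sq (π * φ)
  have hs : (Real.sin (π * φ) : ℂ) ≠ 0 := ofReal_ne_zero.mpr hφ
  rw [e_sub_one_eq, e_half_eq, Real.cot_eq_cos_div_sin]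
  generalize Real.sin (π * φ) = s at *
  generalize Real.cos (π * φ) = c at *
  apply inv_eq_of_mul_eq_one_right
  push_cast
  field_simp
  linear_combination (by exact_mod_cast h : (s : ℂ) ^ 2 + c ^ 2 = 1) -
    (c ^ 2 + s ^ 2 + I * s * c) * I_sq

lemma e_eq_inv_e_sub_one_mul {x y : ℝ} (h : Real.sin (π * (y - x)) ≠ 0) :
    e x = (e (y - x) - 1)⁻¹ • (e y - e x) := by
  have hne : e (y - x) - 1 ≠ 0 := by
    rw [← norm_ne_zero_iff, norm_e_sub_one]
    simpa using h
  rw [smul_eq_mul, ← sub_add_cancel y x, e_add, add_sub_cancel_right, ← sub_one_mul, ← mul_assoc,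
    inv_mul_cancel₀ hne, one_mul]

lemma norm_inv_e_sub_one_sub {φ ψ : ℝ} (hφ : Real.sin (π * φ) ≠ 0) (hψ : Real.sin (π * ψ) ≠ 0) :
    ‖(e ψ - 1)⁻¹ - (e φ - 1)⁻¹‖ = |Real.cot (π * ψ) - Real.cot (π * φ)| / 2 := by
  rw [inv_e_sub_one hφ, inv_e_sub_one hψ, show ∀ x y : ℝ, -(1 + x * I) / 2 - -(1 + y * I) / 2 =
    ((y - x : ℝ) : ℂ) * I / 2 by intros; rw [ofReal_sub]; ring]
  rw [norm_div, norm_mul, norm_real, norm_I, mul_one, Real.norm_eq_abs, RCLike.norm_ofNat,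
    abs_sub_comm]

lemma two_mul_le_sin_pi_mul_of_le_half {φ : ℝ} (h0 : 0 ≤ φ) (h1 : φ ≤ 1 / 2) :
    2 * φ ≤ Real.sin (π * φ) := by
  have hπ := Real.pi_pos
  calc 2 * φ = 2 / π * (π * φ) := by field_simp
    _ ≤ Real.sin (π * φ) := Real.mul_le_sin (by positivity) (by nlinarith)

lemma two_mul_le_sin_pi_mul {lam φ : ℝ} (hlam : 0 ≤ lam) (hφ : φ ∈ Set.Icc lam (1 - lam)) :
    2 * lam ≤ Real.sin (π * φ) := by
  obtain ⟨h1, h2⟩ := hφ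
  rcases le_total φ (1 / 2) with h | h
  · linarith [two_mul_le_sin_pi_mul_of_le_half (by linarith) h]
  · have := two_mul_le_sin_pi_mul_of_le_half (φ := 1 - φ) (by linarith) (by linarith)
    rw [mul_one_sub π, Real.sin_pi_sub] at this
    linarith

lemma sin_pi_mul_ne_zero_of_mem_Icc {lam φ : ℝ} (hlam : 0 < lam) (hφ : φ ∈ Set.Icc lam (1 - lam)) :
    Real.sin (π * φ) ≠ 0 :=
  ((two_mul_le_sin_pi_mul hlam.le hφ).trans_lt' (by positivity)).ne'

lemma Real.cot_antitoneOn : AntitoneOn Real.cot (Set.Ioo 0 π) := by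
  intro x ⟨hx0, hxπ⟩ y ⟨hy0, hyπ⟩ hxy
  have hsx := Real.sin_pos_of_pos_of_lt_pi hx0 hxπ
  have hsy := Real.sin_pos_of_pos_of_lt_pi hy0 hyπ
  have hsub : 0 ≤ Real.sin (y - x) := Real.sin_nonneg_of_nonneg_of_le_pi (by linarith) (by linarith)
  rw [Real.sin_sub] at hsub
  rw [Real.cot_eq_cos_div_sin, Real.cot_eq_cos_div_sin, div_le_div_iff₀ hsy hsx]
  linarith

lemma abs_cot_pi_mul_le {lam φ : ℝ} (hlam : 0 < lam) (hφ : φ ∈ Set.Icc lam (1 - lam)) :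
    |Real.cot (π * φ)| ≤ 1 / (2 * lam) := by
  have hsin := two_mul_le_sin_pi_mul hlam.le hφ
  have hpos : 0 < Real.sin (π * φ) := by linarith
  rw [Real.cot_eq_cos_div_sin, abs_div, abs_of_pos hpos, div_le_div_iff₀ hpos (by positivity)]
  nlinarith [Real.abs_cos_le_one (π * φ)]

lemma norm_inv_e_sub_one_le {lam φ : ℝ} (hlam : 0 < lam) (hφ : φ ∈ Set.Icc lam (1 - lam)) :
    ‖(e φ - 1)⁻¹‖ ≤ 1 / (4 * lam) := by
  have hsin := two_mul_le_sin_pi_mul hlam.le hφ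
  rw [norm_inv, norm_e_sub_one, abs_of_pos (by linarith), ← one_div]
  exact one_div_le_one_div_of_le (by positivity) (by linarith)

lemma sum_Ico_smul_sub_eq {R M : Type*} [Ring R] [AddCommGroup M] [Module R M]
    (f : ℕ → R) (G : ℕ → M) {a b : ℕ} (hab : a ≤ b) :
    ∑ n ∈ Ico a b, f n • (G (n + 1) - G n) =
      f b • G b - f a • G a - ∑ n ∈ Ico a b, (f (n + 1) - f n) • G (n + 1) := by
  induction b, hab using Nat.le_induction with
  | base => simp
  | succ b hab ih =>
    rw [sum_Ico_succ_top hab, sum_Ico_succ_top hab, ih]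
    simp only [smul_sub, sub_smul]
    abel

lemma norm_sum_Ico_smul_sub_le {R V : Type*} [SeminormedRing R] [SeminormedAddCommGroup V]
    [Module R V] [IsBoundedSMul R V] (f : ℕ → R) {G : ℕ → V} {K : ℝ} (hG : ∀ n, ‖G n‖ ≤ K)
    {a b : ℕ} (hab : a ≤ b) :
    ‖∑ n ∈ Ico a b, f n • (G (n + 1) - G n)‖ ≤
      (‖f b‖ + ‖f a‖ + ∑ n ∈ Ico a b, ‖f (n + 1) - f n‖) * K := by
  have hterm (c : R) (n : ℕ) : ‖c • G n‖ ≤ ‖c‖ * K :=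
    (norm_smul_le c (G n)).trans (by gcongr; exact hG n)
  rw [sum_Ico_smul_sub_eq f G hab, add_mul, add_mul, sum_mul]
  refine (norm_sub_le _ _).trans (add_le_add ((norm_sub_le _ _).trans
    (add_le_add (hterm _ _) (hterm _ _))) ((norm_sum_le _ _).trans (sum_le_sum ?_)))
  exact fun n _ ↦ hterm _ _

lemma MonotoneOn.sum_Ico_abs_sub {v : ℕ → ℝ} {a b : ℕ} (hv : MonotoneOn v (Set.Ici a))
    (hab : a ≤ b) : ∑ n ∈ Ico a b, |v (n + 1) - v n| = v b - v a := by
  rw [← sum_Ico_sub v hab]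
  refine sum_congr rfl fun n hn ↦ abs_of_nonneg (sub_nonneg.mpr (hv ?_ ?_ n.le_succ))
  · exact Set.mem_Ici.mpr (mem_Ico.mp hn).1
  · exact Set.mem_Ici.mpr ((mem_Ico.mp hn).1.trans n.le_succ)

lemma AntitoneOn.sum_Ico_abs_sub {v : ℕ → ℝ} {a b : ℕ} (hv : AntitoneOn v (Set.Ici a))
    (hab : a ≤ b) : ∑ n ∈ Ico a b, |v (n + 1) - v n| = v a - v b := by
  have := hv.neg.sum_Ico_abs_sub hab
  simp only [← neg_sub', abs_neg] at this
  linarith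

lemma norm_sum_Ico_smul_le_of_antitoneOn {V : Type*} [SeminormedAddCommGroup V] [NormedSpace ℝ V]
    {w : ℕ → ℝ} {E : ℕ → V} {a : ℕ} {K : ℝ} (hw0 : ∀ n, a ≤ n → 0 ≤ w n)
    (hw : AntitoneOn w (Set.Ici a)) (hE : ∀ m, ‖∑ n ∈ Ico a m, E n‖ ≤ K) (b : ℕ) :
    ‖∑ n ∈ Ico a b, w n • E n‖ ≤ 2 * w a * K := by
  rcases lt_or_ge b a with hba | hab
  · rw [Ico_eq_empty_of_le hba.le, sum_empty, norm_zero]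
    exact mul_nonneg (mul_nonneg zero_le_two (hw0 a le_rfl)) ((norm_nonneg _).trans (hE a))
  have hsplit : ∑ n ∈ Ico a b, w n • E n =
      ∑ n ∈ Ico a b, w n • (∑ k ∈ Ico a (n + 1), E k - ∑ k ∈ Ico a n, E k) :=
    sum_congr rfl fun n hn ↦ by rw [sum_Ico_succ_top (mem_Ico.mp hn).1, add_sub_cancel_left]
  rw [hsplit]
  refine (norm_sum_Ico_smul_sub_le w hE hab).trans (le_of_eq ?_)
  simp only [Real.norm_eq_abs]
  rw [hw.sum_Ico_abs_sub hab, abs_of_nonneg (hw0 b hab), abs_of_nonneg (hw0 a le_rfl)]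
  ring

lemma sum_norm_inv_e_sub_one_sub_le {φ : ℕ → ℝ} {a b : ℕ} {lam : ℝ} (hlam : 0 < lam)
    (hφ : ∀ n, a ≤ n → φ n ∈ Set.Icc lam (1 - lam))
    (hmono : MonotoneOn φ (Set.Ici a) ∨ AntitoneOn φ (Set.Ici a)) (hab : a ≤ b) :
    ∑ n ∈ Ico a b, ‖(e (φ (n + 1)) - 1)⁻¹ - (e (φ n) - 1)⁻¹‖ ≤ 1 / (2 * lam) := by
  set c : ℕ → ℝ := fun n ↦ Real.cot (π * φ n)
  have hmaps : Set.MapsTo (fun n ↦ π * φ n) (Set.Ici a) (Set.Ioo 0 π) := fun n hn ↦ by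
    have := hφ n hn
    constructor <;> nlinarith [Real.pi_pos, this.1, this.2]
  have hc : AntitoneOn c (Set.Ici a) ∨ MonotoneOn c (Set.Ici a) := by
    refine hmono.imp (fun h ↦ Real.cot_antitoneOn.comp_MonotoneOn ?_ hmaps)
      (fun h ↦ Real.cot_antitoneOn.comp ?_ hmaps)
    · exact fun x hx y hy hxy ↦ mul_le_mul_of_nonneg_left (h hx hy hxy) Real.pi_pos.le
    · exact fun x hx y hy hxy ↦ mul_le_mul_of_nonneg_left (h hx hy hxy) Real.pi_pos.le
  have htel : ∑ n ∈ Ico a b, |c (n + 1) - c n| ≤ |c b| + |c a| := by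
    rcases hc with h | h
    · rw [h.sum_Ico_abs_sub hab]; linarith [neg_abs_le (c b), le_abs_self (c a)]
    · rw [h.sum_Ico_abs_sub hab]; linarith [le_abs_self (c b), neg_abs_le (c a)]
  have hcb := abs_cot_pi_mul_le hlam (hφ b hab)
  have hca := abs_cot_pi_mul_le hlam (hφ a le_rfl)
  calc _ = (∑ n ∈ Ico a b, |c (n + 1) - c n|) / 2 := by
        rw [sum_div]
        refine sum_congr rfl fun n hn ↦ norm_inv_e_sub_one_sub ?_ ?_
        · exact sin_pi_mul_ne_zero_of_mem_Icc hlam (hφ n (mem_Ico.mp hn).1)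
        · exact sin_pi_mul_ne_zero_of_mem_Icc hlam (hφ (n + 1) ((mem_Ico.mp hn).1.trans n.le_succ))
    _ ≤ 1 / (2 * lam) := by linarith

theorem kusmin_landau {g : ℕ → ℝ} {a : ℕ} {lam : ℝ} (hlam : 0 < lam)
    (hg : ∀ n, a ≤ n → g (n + 1) - g n ∈ Set.Icc lam (1 - lam))
    (hmono : MonotoneOn (fun n ↦ g (n + 1) - g n) (Set.Ici a) ∨
      AntitoneOn (fun n ↦ g (n + 1) - g n) (Set.Ici a)) (b : ℕ) :
    ‖∑ n ∈ Ico a b, e (g n)‖ ≤ 1 / lam := by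
  rcases lt_or_ge b a with hba | hab
  · rw [Ico_eq_empty_of_le hba.le, sum_empty, norm_zero]
    positivity
  set f : ℕ → ℂ := fun n ↦ (e (g (n + 1) - g n) - 1)⁻¹
  have hsplit : ∑ n ∈ Ico a b, e (g n) = ∑ n ∈ Ico a b, f n • (e (g (n + 1)) - e (g n)) :=
    sum_congr rfl fun n hn ↦
      e_eq_inv_e_sub_one_mul (sin_pi_mul_ne_zero_of_mem_Icc hlam (hg n (mem_Ico.mp hn).1))
  have hfb := norm_inv_e_sub_one_le hlam (hg b hab)
  have hfa := norm_inv_e_sub_one_le hlam (hg a le_rfl)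
  have hvar := sum_norm_inv_e_sub_one_sub_le hlam hg hmono hab
  rw [hsplit]
  refine (norm_sum_Ico_smul_sub_le f (fun n ↦ (norm_e (g n)).le) hab).trans ?_
  calc _ ≤ (1 / (4 * lam) + 1 / (4 * lam) + 1 / (2 * lam)) * 1 := by gcongr
    _ = 1 / lam := by field_simp; ring

lemma log_add_one_sub_log_mem_Icc {x : ℝ} (hx : 0 < x) :
    Real.log (x + 1) - Real.log x ∈ Set.Icc 0 (1 / x) := by
  rw [← Real.log_div (by positivity) hx.ne', add_div, div_self hx.ne', add_comm]
  exact ⟨Real.log_nonneg (by simp; positivity), (Real.log_le_sub_one_of_pos (by positivity)).trans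
    (by simp)⟩

lemma antitoneOn_log_add_one_sub_log :
    AntitoneOn (fun x : ℝ ↦ Real.log (x + 1) - Real.log x) (Set.Ioi 0) := by
  intro x (hx : 0 < x) y (hy : 0 < y) hxy
  simp only [← Real.log_div (by positivity : x + 1 ≠ 0) hx.ne',
    ← Real.log_div (by positivity : y + 1 ≠ 0) hy.ne', add_div, div_self hx.ne', div_self hy.ne']
  exact Real.log_le_log (by positivity) (by gcongr)

lemma norm_sum_e_phase_le_of_pos {γ η : ℝ} {a : ℕ} (ha : 0 < a) (hη : 0 < η) (hη2 : η ≤ 1 / 2)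
    (hγ : |γ| ≤ a * η) (m : ℕ) :
    ‖∑ n ∈ Ico a m, e (n * η + γ * Real.log n / (2 * π))‖ ≤ 2 / η := by
  set L : ℕ → ℝ := fun n ↦ Real.log ((n : ℝ) + 1) - Real.log n
  set k := γ / (2 * π)
  have hπ := Real.pi_gt_three
  have hpos (n : ℕ) (hn : a ≤ n) : (0 : ℝ) < n := by exact_mod_cast ha.trans_le hn
  have hdiff (n : ℕ) : ((n + 1 : ℕ) : ℝ) * η + γ * Real.log (n + 1 : ℕ) / (2 * π) -
      (n * η + γ * Real.log n / (2 * π)) = η + k * L n := by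
    push_cast; ring
  have hkL (n : ℕ) (hn : a ≤ n) : |k * L n| ≤ η / 2 := by
    obtain ⟨hL0, hL1⟩ := log_add_one_sub_log_mem_Icc (hpos n hn)
    have hn' : (a : ℝ) ≤ n := by exact_mod_cast hn
    rw [abs_mul, abs_of_nonneg hL0, abs_div, abs_of_pos (by positivity : (0 : ℝ) < 2 * π)]
    calc |γ| / (2 * π) * L n ≤ a * η / (2 * π) * (1 / n) := by gcongr
      _ ≤ η / 2 := by
        have := hpos n hn
        rw [div_mul_div_comm, div_le_div_iff₀ (by positivity) (by norm_num), mul_one]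
        nlinarith [mul_nonneg (mul_nonneg hη.le this.le) (by linarith : (0 : ℝ) ≤ π - 1)]
  have hL : AntitoneOn L (Set.Ici a) := fun x hx y hy hxy ↦
    antitoneOn_log_add_one_sub_log (hpos x hx) (hpos y hy) (by exact_mod_cast hxy)
  refine (kusmin_landau (g := fun n : ℕ ↦ n * η + γ * Real.log n / (2 * π)) (lam := η / 2)
    (by positivity) ?_ ?_ m).trans_eq (one_div_div η 2)
  · intro n hn
    simp only [hdiff]
    have := abs_le.mp (hkL n hn)
    constructor <;> linarith [this.1, this.2]
  · simp only [hdiff]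
    rcases le_or_gt 0 k with hk | hk
    · exact Or.inr fun x hx y hy hxy ↦
        add_le_add_right (mul_le_mul_of_nonneg_left (hL hx hy hxy) hk) η
    · exact Or.inl fun x hx y hy hxy ↦
        add_le_add_right (mul_le_mul_of_nonpos_left (hL hx hy hxy) hk.le) η

lemma norm_sum_e_phase_le {γ η : ℝ} {a : ℕ} (ha : 0 < a) (hη : η ≠ 0) (hη2 : |η| ≤ 1 / 2)
    (hγ : |γ| ≤ a * |η|) (m : ℕ) :
    ‖∑ n ∈ Ico a m, e (n * η + γ * Real.log n / (2 * π))‖ ≤ 2 / |η| := by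
  rcases hη.lt_or_gt with hneg | hpos
  · rw [← norm_sum_e_neg]
    rw [abs_of_neg hneg] at hη2 hγ ⊢
    convert norm_sum_e_phase_le_of_pos (γ := -γ) ha (neg_pos.mpr hneg) hη2 (by rwa [abs_neg]) m
      using 4
    ring
  · rw [abs_of_pos hpos] at hη2 hγ ⊢
    exact norm_sum_e_phase_le_of_pos ha hpos hη2 hγ m

lemma ofReal_cpow_add_mul_I {x : ℝ} (hx : 0 < x) (σ γ : ℝ) :
    (x : ℂ) ^ ((σ : ℂ) + γ * I) = (x ^ σ : ℝ) • e (γ * Real.log x / (2 * π)) := by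
  have hx' : (x : ℂ) ≠ 0 := ofReal_ne_zero.mpr hx.ne'
  rw [cpow_add _ _ hx', ← ofReal_cpow hx.le, real_smul, cpow_def_of_ne_zero hx',
    ← ofReal_log hx.le, e]
  congr 2
  push_cast
  field_simp

lemma natCast_cpow_mul_e_eq_rpow_smul_e {n : ℕ} (hn : 0 < n) (δ γ η : ℝ) :
    (n : ℂ) ^ ((((1 - δ : ℝ) : ℂ) + γ * I) - 1) * e (n * η) =
      ((n : ℝ) ^ (-δ)) • e (n * η + γ * Real.log n / (2 * π)) := by
  rw [show (((1 - δ : ℝ) : ℂ) + γ * I) - 1 = ((-δ : ℝ) : ℂ) + γ * I by push_cast; ring,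
    ← ofReal_natCast, ofReal_cpow_add_mul_I (Nat.cast_pos.mpr hn), e_add, smul_mul_assoc, mul_comm]

/-- For ρ = 1−δ+iγ with 0 ≤ δ ≤ 1, X₁ ≥ 1 and |γ|/X₁ ≤ |η| ≤ 1/2 (η ≠ 0),
T_ρ(η) = Σ_{X₁<n≤X} n^{ρ−1} e(nη) satisfies |T_ρ(η)| ≪ X₁^{-δ}|η|^{-1},
with an absolute implied constant. -/
theorem T_rho_bound :
    ∃ C : ℝ, ∀ (X X₁ δ γ η : ℝ), 0 ≤ δ → δ ≤ 1 → 1 ≤ X₁ →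
      |γ| / X₁ ≤ |η| → |η| ≤ 1 / 2 → η ≠ 0 →
      ‖∑ n ∈ Finset.Ioc ⌊X₁⌋₊ ⌊X⌋₊,
          (n : ℂ) ^ ((((1 - δ : ℝ) : ℂ) + γ * Complex.I) - 1) * e (n * η)‖ ≤
        C * X₁ ^ (-δ) / |η| := by
  refine ⟨4, fun X X₁ δ γ η hδ _ hX₁ hγη hη2 hη ↦ ?_⟩
  set a := ⌊X₁⌋₊ + 1
  have ha : 0 < a := Nat.succ_pos _
  have hX₁a : X₁ < a := by exact_mod_cast Nat.lt_floor_add_one X₁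
  have hγ : |γ| ≤ a * |η| := by
    rw [div_le_iff₀ (by linarith)] at hγη
    nlinarith [abs_nonneg η]
  have hw : AntitoneOn (fun n : ℕ ↦ (n : ℝ) ^ (-δ)) (Set.Ici a) := fun m hm n _ hmn ↦
    Real.rpow_le_rpow_of_nonpos (by exact_mod_cast ha.trans_le hm) (by exact_mod_cast hmn)
      (by linarith)
  rw [← Ico_add_one_add_one_eq_Ioc, sum_congr rfl fun n hn ↦
    natCast_cpow_mul_e_eq_rpow_smul_e (ha.trans_le (mem_Ico.mp hn).1) δ γ η]
  calc _ ≤ 2 * (a : ℝ) ^ (-δ) * (2 / |η|) :=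
        norm_sum_Ico_smul_le_of_antitoneOn (fun n _ ↦ by positivity) hw
          (norm_sum_e_phase_le ha hη hη2 hγ) _
    _ ≤ 2 * X₁ ^ (-δ) * (2 / |η|) := by
        have := Real.rpow_le_rpow_of_nonpos (by linarith) hX₁a.le (neg_nonpos.mpr hδ)
        gcongr
    _ = 4 * X₁ ^ (-δ) / |η| := by ring
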